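/- Let Q be a key polynomial for ν, and f, g nonzero polynomials of degree smaller than deg(Q), and n, m nonnegative integers. Then ν_Q(fQ^n · gQ^m) = ν(fQ^n) + ν(gQ^m) and δ_Q(fQ^n · gQ^m) = n + m. -/

import Mathlib

open Polynomial

variable {K : Type*} [Field K]

/-- `ν` is a (rank one, real-valued) valuation on `K[x]`, specified on nonzero
polynomials. -/
def IsVal {K : Type*} [Field K] (ν : Polynomial K → ℝ) : Prop :=
  (∀ f g : Polynomial K, f ≠ 0 → g ≠ 0 → ν (f * g) = ν f + ν g) ∧
  (∀ f g : Polynomial K, f ≠ 0 → g ≠ 0 → f + g ≠ 0 → min (ν f) (ν g) ≤ ν (f + g))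

/-- The level `ε(f)` of a nonzero polynomial: the maximum of
`(ν f - ν (∂_b f))/b` over `b ≥ 1` (with `∂_b` the Hasse derivatives). -/
noncomputable def eps {K : Type*} [Field K] (ν : Polynomial K → ℝ) (f : Polynomial K) : ℝ :=
  sSup {r : ℝ | ∃ b : ℕ, 1 ≤ b ∧ hasseDeriv b f ≠ 0 ∧ r = (ν f - ν (hasseDeriv b f)) / b}

/-- The set `I(f)` of indices where the bound `ν(∂_b f) ≥ ν f - b ε(f)` is an equality. -/
def Iset {K : Type*} [Field K] (ν : Polynomial K → ℝ) (f : Polynomial K) : Set ℕ :=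
  {b | 1 ≤ b ∧ hasseDeriv b f ≠ 0 ∧ ν (hasseDeriv b f) = ν f - b * eps ν f}

/-- `Q` is a key polynomial for `ν`. -/
def IsKeyPol {K : Type*} [Field K] (ν : Polynomial K → ℝ) (Q : Polynomial K) : Prop :=
  Q.Monic ∧ 0 < Q.natDegree ∧
    ∀ f : Polynomial K, f ≠ 0 → f.natDegree < Q.natDegree → eps ν f < eps ν Q

/-- The coefficients of the `Q`-expansion of `f`:  `f = Σ i, qc Q f i * Q ^ i`
with `deg (qc Q f i) < deg Q`. -/
noncomputable def qc {K : Type*} [Field K] (Q : Polynomial K) : Polynomial K → ℕ → Polynomial K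
  | f, 0 => f %ₘ Q
  | f, (i + 1) => qc Q (f /ₘ Q) i

/-- The degree of the `Q`-expansion of `f`. -/
def degQ {K : Type*} [Field K] (Q f : Polynomial K) : ℕ := f.natDegree / Q.natDegree

/-- The truncation `ν_Q(f) = min_i ν (f_i Q^i)` of `ν` at `Q`. -/
noncomputable def nuQ {K : Type*} [Field K] (ν : Polynomial K → ℝ) (Q f : Polynomial K) : ℝ :=
  sInf {r : ℝ | ∃ i : ℕ, qc Q f i ≠ 0 ∧ r = ν (qc Q f i * Q ^ i)}

/-- The set `S_Q(f)` of indices attaining the minimum in `ν_Q(f)`. -/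
def SQ {K : Type*} [Field K] (ν : Polynomial K → ℝ) (Q f : Polynomial K) : Set ℕ :=
  {i | qc Q f i ≠ 0 ∧ ν (qc Q f i * Q ^ i) = nuQ ν Q f}

/-- `δ_Q(f) = max S_Q(f)`. -/
noncomputable def deltaQ {K : Type*} [Field K] (ν : Polynomial K → ℝ) (Q f : Polynomial K) : ℕ :=
  sSup (SQ ν Q f)

/-- The set `Ψ_α` of key polynomials for `ν` of degree `α`. -/
def Psi {K : Type*} [Field K] (ν : Polynomial K → ℝ) (α : ℕ) : Set (Polynomial K) :=
  {Q | IsKeyPol ν Q ∧ Q.natDegree = α}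

/-- The set `S_α` of (nonzero) polynomials whose value is not computed by any
truncation at a key polynomial of degree `α`. -/
def Slim {K : Type*} [Field K] (ν : Polynomial K → ℝ) (α : ℕ) : Set (Polynomial K) :=
  {f | f ≠ 0 ∧ ∀ Q ∈ Psi ν α, nuQ ν Q f < ν f}

/-- `p` is the characteristic exponent of the residue field of `ν`: either `p = 1`
and all nonzero natural numbers have value `0`, or `p` is a prime, `p` has
positive value (or is `0` in `K`), and naturals prime to `p` have value `0`. -/
def CharExp {K : Type*} [Field K] (ν : Polynomial K → ℝ) (p : ℕ) : Prop :=
  (p = 1 ∧ ∀ n : ℕ, (n : Polynomial K) ≠ 0 → ν (n : Polynomial K) = 0) ∨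
  (p.Prime ∧ ((p : Polynomial K) = 0 ∨ 0 < ν (p : Polynomial K)) ∧
    ∀ n : ℕ, ¬ p ∣ n → ν (n : Polynomial K) = 0)


section Aux

variable {K : Type*} [Field K] {ν : Polynomial K → ℝ}

lemma nu_one (hν : IsVal ν) : ν (1 : Polynomial K) = 0 := by
  have h := hν.1 1 1 one_ne_zero one_ne_zero
  rw [mul_one] at h; linarith

lemma nu_neg (hν : IsVal ν) {h : Polynomial K} (h0 : h ≠ 0) : ν (-h) = ν h := by
  have hm1 : ν (-1 : Polynomial K) = 0 := by
    have h2 := hν.1 (-1) (-1) (by norm_num) (by norm_num)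
    rw [neg_mul_neg, one_mul, nu_one hν] at h2; linarith
  have := hν.1 (-1) h (by norm_num) h0
  rw [neg_one_mul] at this
  rw [this, hm1, zero_add]

lemma nu_pow (hν : IsVal ν) {Q : Polynomial K} (hQ : Q ≠ 0) (k : ℕ) :
    ν (Q ^ k) = k * ν Q := by
  induction k with
  | zero => simp [nu_one hν]
  | succ k ih =>
    rw [pow_succ, hν.1 _ _ (pow_ne_zero _ hQ) hQ, ih]
    push_cast; ring

lemma nu_add_left (hν : IsVal ν) {a b : Polynomial K} (ha : a ≠ 0)
    (hb : b = 0 ∨ (b ≠ 0 ∧ ν a < ν b)) : a + b ≠ 0 ∧ ν (a + b) = ν a := by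
  rcases hb with rfl | ⟨hb0, hlt⟩
  · simpa using ha
  have hne : a + b ≠ 0 := by
    intro h
    have hab : a = -b := by linear_combination h
    rw [hab, nu_neg hν hb0] at hlt; exact lt_irrefl _ hlt
  refine ⟨hne, ?_⟩
  have h1 : min (ν a) (ν b) ≤ ν (a + b) := hν.2 a b ha hb0 hne
  have h2 : min (ν (a + b)) (ν (-b)) ≤ ν a := by
    have h3 := hν.2 (a + b) (-b) hne (neg_ne_zero.mpr hb0) (by simpa using ha)
    have h4 : a + b + -b = a := by ring
    rwa [h4] at h3
  rw [nu_neg hν hb0] at h2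
  rcases le_or_gt (ν (a + b)) (ν a) with h | h
  · refine le_antisymm h ?_
    rw [min_eq_left hlt.le] at h1; exact h1
  · exfalso; rcases min_le_iff.mp h2 with h' | h' <;> linarith

lemma nu_sum_ge (hν : IsVal ν) {ι : Type*} (s : Finset ι) (F : ι → Polynomial K) (c : ℝ)
    (hc : ∀ i ∈ s, F i ≠ 0 → c ≤ ν (F i)) (hs : ∑ i ∈ s, F i ≠ 0) :
    c ≤ ν (∑ i ∈ s, F i) := by
  classical
  induction s using Finset.induction_on with
  | empty => simp at hs
  | @insert a s ha ih =>
    rw [Finset.sum_insert ha] at hs ⊢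
    by_cases h0 : F a = 0
    · rw [h0, zero_add] at hs ⊢
      exact ih (fun i hi => hc i (Finset.mem_insert_of_mem hi)) hs
    by_cases hT : ∑ i ∈ s, F i = 0
    · rw [hT, add_zero]
      exact hc a (Finset.mem_insert_self a s) h0
    have := hν.2 _ _ h0 hT hs
    have hca := hc a (Finset.mem_insert_self a s) h0
    have hcT := ih (fun i hi => hc i (Finset.mem_insert_of_mem hi)) hT
    rcases min_le_iff.mp this with h | h <;> linarith

lemma nu_sum_gt (hν : IsVal ν) {ι : Type*} (s : Finset ι) (F : ι → Polynomial K) (c : ℝ)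
    (hc : ∀ i ∈ s, F i ≠ 0 → c < ν (F i)) (hs : ∑ i ∈ s, F i ≠ 0) :
    c < ν (∑ i ∈ s, F i) := by
  classical
  induction s using Finset.induction_on with
  | empty => simp at hs
  | @insert a s ha ih =>
    rw [Finset.sum_insert ha] at hs ⊢
    by_cases h0 : F a = 0
    · rw [h0, zero_add] at hs ⊢
      exact ih (fun i hi => hc i (Finset.mem_insert_of_mem hi)) hs
    by_cases hT : ∑ i ∈ s, F i = 0
    · rw [hT, add_zero]
      exact hc a (Finset.mem_insert_self a s) h0
    have := hν.2 _ _ h0 hT hs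
    have hca := hc a (Finset.mem_insert_self a s) h0
    have hcT := ih (fun i hi => hc i (Finset.mem_insert_of_mem hi)) hT
    rcases min_le_iff.mp this with h | h <;> linarith

lemma nu_sum_eq (hν : IsVal ν) {ι : Type*} [DecidableEq ι] {s : Finset ι}
    (F : ι → Polynomial K) {i0 : ι} (hi0 : i0 ∈ s) (h0 : F i0 ≠ 0)
    (hdom : ∀ i ∈ s, i ≠ i0 → F i ≠ 0 → ν (F i0) < ν (F i)) :
    (∑ i ∈ s, F i) ≠ 0 ∧ ν (∑ i ∈ s, F i) = ν (F i0) := by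
  rw [← Finset.add_sum_erase _ _ hi0]
  apply nu_add_left hν h0
  by_cases hT : ∑ i ∈ s.erase i0, F i = 0
  · exact Or.inl hT
  · refine Or.inr ⟨hT, nu_sum_gt hν _ _ _ ?_ hT⟩
    intro i hi hne
    exact hdom i (Finset.mem_of_mem_erase hi) (Finset.ne_of_mem_erase hi) hne

lemma hasseDeriv_eq_zero_of_natDegree_lt {f : Polynomial K} {b : ℕ} (h : f.natDegree < b) :
    hasseDeriv b f = 0 := by
  ext n
  rw [hasseDeriv_coeff, coeff_eq_zero_of_natDegree_lt (by omega), coeff_zero, mul_zero]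

lemma eps_set_finite (ν : Polynomial K → ℝ) (f : Polynomial K) :
    {r : ℝ | ∃ b : ℕ, 1 ≤ b ∧ hasseDeriv b f ≠ 0 ∧
      r = (ν f - ν (hasseDeriv b f)) / b}.Finite := by
  apply Set.Finite.subset
    ((Set.finite_Icc 1 f.natDegree).image (fun b : ℕ => (ν f - ν (hasseDeriv b f)) / b))
  rintro r ⟨b, hb1, hb0, rfl⟩
  refine ⟨b, ⟨hb1, ?_⟩, rfl⟩
  by_contra h
  exact hb0 (hasseDeriv_eq_zero_of_natDegree_lt (by omega))

lemma nu_hasseDeriv_ge (hν : IsVal ν) (f : Polynomial K) (b : ℕ)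
    (hb : hasseDeriv b f ≠ 0) : ν f - b * eps ν f ≤ ν (hasseDeriv b f) := by
  rcases Nat.eq_zero_or_pos b with rfl | hb1
  · rw [hasseDeriv_zero']; simp
  · have hmem : (ν f - ν (hasseDeriv b f)) / b ∈
        {r : ℝ | ∃ b : ℕ, 1 ≤ b ∧ hasseDeriv b f ≠ 0 ∧
          r = (ν f - ν (hasseDeriv b f)) / b} := ⟨b, hb1, hb, rfl⟩
    have hle : (ν f - ν (hasseDeriv b f)) / b ≤ eps ν f :=
      le_csSup (eps_set_finite ν f).bddAbove hmem
    have hbpos : (0:ℝ) < b := by exact_mod_cast hb1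
    rw [div_le_iff₀ hbpos] at hle
    nlinarith

lemma eps_eq_zero_of_natDegree_zero (ν : Polynomial K → ℝ) {f : Polynomial K}
    (hf : f.natDegree = 0) : eps ν f = 0 := by
  unfold eps
  convert Real.sSup_empty using 2
  ext r
  simp only [Set.mem_setOf_eq, Set.mem_empty_iff_false, iff_false]
  rintro ⟨b, hb1, hb0, _⟩
  exact hb0 (hasseDeriv_eq_zero_of_natDegree_lt (by omega))

lemma eps_key_pos {Q : Polynomial K} (hQ : IsKeyPol ν Q) : 0 < eps ν Q := by
  have h := hQ.2.2 1 one_ne_zero (by simpa [Polynomial.natDegree_one] using hQ.2.1)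
  rwa [eps_eq_zero_of_natDegree_zero ν Polynomial.natDegree_one] at h

lemma exists_Iset (ν : Polynomial K → ℝ) {Q : Polynomial K} (hQ0 : Q ≠ 0)
    (hd : 0 < Q.natDegree) :
    ∃ b : ℕ, 1 ≤ b ∧ hasseDeriv b Q ≠ 0 ∧
      ν (hasseDeriv b Q) = ν Q - b * eps ν Q := by
  have hD : hasseDeriv Q.natDegree Q ≠ 0 := by
    intro h
    have h2 := congrArg (fun p : Polynomial K => p.coeff 0) h
    simp only [hasseDeriv_coeff, zero_add, Nat.choose_self, Nat.cast_one, one_mul,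
      coeff_zero] at h2
    exact (Polynomial.leadingCoeff_ne_zero.mpr hQ0) h2
  have hne : {r : ℝ | ∃ b : ℕ, 1 ≤ b ∧ hasseDeriv b Q ≠ 0 ∧
      r = (ν Q - ν (hasseDeriv b Q)) / b}.Nonempty :=
    ⟨_, Q.natDegree, hd, hD, rfl⟩
  have hmem := hne.csSup_mem (eps_set_finite ν Q)
  obtain ⟨b, hb1, hb0, hb⟩ := hmem
  refine ⟨b, hb1, hb0, ?_⟩
  have hbpos : (0:ℝ) < b := by exact_mod_cast hb1
  have : eps ν Q = (ν Q - ν (hasseDeriv b Q)) / b := hb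
  field_simp at this
  linarith

lemma nu_hasseDeriv_mul_ge (hν : IsVal ν) {f g : Polynomial K} (b : ℕ)
    (hb : hasseDeriv b (f * g) ≠ 0) :
    ν f + ν g - b * max (eps ν f) (eps ν g) ≤ ν (hasseDeriv b (f * g)) := by
  rw [hasseDeriv_mul]
  apply nu_sum_ge hν _ _ _ ?_ (by rwa [← hasseDeriv_mul])
  rintro ⟨i, j⟩ hij hne
  rw [Finset.HasAntidiagonal.mem_antidiagonal] at hij
  have hi : hasseDeriv i f ≠ 0 := left_ne_zero_of_mul hne
  have hj : hasseDeriv j g ≠ 0 := right_ne_zero_of_mul hne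
  rw [hν.1 _ _ hi hj]
  have h1 := nu_hasseDeriv_ge hν f i hi
  have h2 := nu_hasseDeriv_ge hν g j hj
  have hi' : (i:ℝ) * eps ν f ≤ i * max (eps ν f) (eps ν g) :=
    mul_le_mul_of_nonneg_left (le_max_left _ _) (Nat.cast_nonneg i)
  have hj' : (j:ℝ) * eps ν g ≤ j * max (eps ν f) (eps ν g) :=
    mul_le_mul_of_nonneg_left (le_max_right _ _) (Nat.cast_nonneg j)
  have hb' : ((i:ℝ) + j) = b := by exact_mod_cast congrArg (Nat.cast : ℕ → ℝ) hij
  have hsplit : (b:ℝ) * (max (eps ν f) (eps ν g)) =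
      i * (max (eps ν f) (eps ν g)) + j * (max (eps ν f) (eps ν g)) := by
    rw [← hb']; ring
  linarith

lemma nu_hasseDeriv_qQ (hν : IsVal ν) {Q q : Polynomial K} (hQ : IsKeyPol ν Q)
    (hq : q ≠ 0) (hdq : q.natDegree < Q.natDegree)
    {b : ℕ} (hb1 : 1 ≤ b) (hbD : hasseDeriv b Q ≠ 0)
    (hbI : ν (hasseDeriv b Q) = ν Q - b * eps ν Q) :
    hasseDeriv b (q * Q) ≠ 0 ∧ ν (hasseDeriv b (q * Q)) = ν q + ν Q - b * eps ν Q := by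
  rw [hasseDeriv_mul]
  have hmem : ((0, b) : ℕ × ℕ) ∈ Finset.HasAntidiagonal.antidiagonal b := by
    rw [Finset.HasAntidiagonal.mem_antidiagonal]; simp
  have h0 : hasseDeriv (0:ℕ) q * hasseDeriv b Q ≠ 0 := by
    rw [hasseDeriv_zero']; exact mul_ne_zero hq hbD
  have hval : ν (hasseDeriv (0:ℕ) q * hasseDeriv b Q) = ν q + ν Q - b * eps ν Q := by
    rw [hasseDeriv_zero', hν.1 _ _ hq hbD, hbI]; ring
  have heq : eps ν q < eps ν Q := hQ.2.2 q hq hdq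
  have key := nu_sum_eq hν (fun ij : ℕ × ℕ => hasseDeriv ij.1 q * hasseDeriv ij.2 Q)
      hmem h0 ?_
  · exact ⟨key.1, by rw [key.2, hval]⟩
  rintro ⟨i, j⟩ hij hne hnz
  rw [Finset.HasAntidiagonal.mem_antidiagonal] at hij
  have hi1 : 1 ≤ i := by
    rcases Nat.eq_zero_or_pos i with rfl | h
    · exact absurd (by simpa using hij) (by simpa using hne)
    · exact h
  have hiq : hasseDeriv i q ≠ 0 := left_ne_zero_of_mul hnz
  have hjQ : hasseDeriv j Q ≠ 0 := right_ne_zero_of_mul hnz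
  rw [hval, hν.1 _ _ hiq hjQ]
  have h1 := nu_hasseDeriv_ge hν q i hiq
  have h2 := nu_hasseDeriv_ge hν Q j hjQ
  have hipos : (0:ℝ) < i := by exact_mod_cast hi1
  have hi' : (i:ℝ) * eps ν q < i * eps ν Q := by
    exact mul_lt_mul_of_pos_left heq hipos
  have hb' : ((i:ℝ) + j) = b := by exact_mod_cast congrArg (Nat.cast : ℕ → ℝ) hij
  have hsplit : (b:ℝ) * eps ν Q = i * eps ν Q + j * eps ν Q := by rw [← hb']; ring
  linarith

end Aux

section Aux2

variable {K : Type*} [Field K] {ν : Polynomial K → ℝ}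

open Polynomial

/-- Core lemma: for `f, g` of degree `< deg Q`, writing `f*g = q*Q + r`, we have
`r ≠ 0`, `ν r = ν f + ν g`, and if `q ≠ 0` then `ν r < ν q + ν Q`. -/
lemma core_key (hν : IsVal ν) {Q : Polynomial K} (hQ : IsKeyPol ν Q)
    {f g : Polynomial K} (hf : f ≠ 0) (hg : g ≠ 0)
    (hdf : f.natDegree < Q.natDegree) (hdg : g.natDegree < Q.natDegree) :
    (f * g) %ₘ Q ≠ 0 ∧ ν ((f * g) %ₘ Q) = ν f + ν g ∧
      ((f * g) /ₘ Q ≠ 0 → ν ((f * g) %ₘ Q) < ν ((f * g) /ₘ Q) + ν Q) := by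
  obtain ⟨hmon, hdQ, hkey⟩ := hQ
  have hQ0 : Q ≠ 0 := hmon.ne_zero
  have hQ1 : Q ≠ 1 := by intro h; rw [h, natDegree_one] at hdQ; omega
  set q := (f * g) /ₘ Q with hq
  set r := (f * g) %ₘ Q with hr
  have hfg : f * g ≠ 0 := mul_ne_zero hf hg
  have hsum : r + Q * q = f * g := modByMonic_add_div _ Q
  have hfgv : ν (f * g) = ν f + ν g := hν.1 f g hf hg
  have hdr : r.natDegree < Q.natDegree := natDegree_modByMonic_lt _ hmon hQ1
  by_cases hq0 : q = 0
  · have hr_eq : r = f * g := by rw [← hsum, hq0, mul_zero, add_zero]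
    exact ⟨hr_eq ▸ hfg, by rw [hr_eq, hfgv], fun h => absurd hq0 h⟩
  have hdq' : q.natDegree < Q.natDegree := by
    have h1 : q.natDegree = (f * g).natDegree - Q.natDegree :=
      natDegree_divByMonic _ hmon
    have h2 : (f * g).natDegree = f.natDegree + g.natDegree := natDegree_mul hf hg
    omega
  have hfg_eq : f * g = q * Q + r := by rw [← hsum]; ring
  have hqQ0 : q * Q ≠ 0 := mul_ne_zero hq0 hQ0
  have hqQv : ν (q * Q) = ν q + ν Q := hν.1 q Q hq0 hQ0
  have hmain : r ≠ 0 ∧ ν r < ν q + ν Q := by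
    by_contra hcon
    push_neg at hcon
    obtain ⟨b0, hb1, hbD, hbI⟩ := exists_Iset ν hQ0 hdQ
    obtain ⟨hqQne, hqQval⟩ :=
      nu_hasseDeriv_qQ hν ⟨hmon, hdQ, hkey⟩ hq0 hdq' hb1 hbD hbI
    have hb0pos : (0:ℝ) < b0 := by exact_mod_cast hb1
    -- the hasse derivative of f*g at b0
    have hDfg : hasseDeriv b0 (f * g) ≠ 0 ∧
        ν (hasseDeriv b0 (f * g)) = ν q + ν Q - b0 * eps ν Q := by
      have hsplit : hasseDeriv b0 (f * g) = hasseDeriv b0 (q * Q) + hasseDeriv b0 r := by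
        rw [hfg_eq, map_add]
      rw [hsplit]
      have hside : hasseDeriv b0 r = 0 ∨
          (hasseDeriv b0 r ≠ 0 ∧ ν (hasseDeriv b0 (q * Q)) < ν (hasseDeriv b0 r)) := by
        by_cases hB : hasseDeriv b0 r = 0
        · exact Or.inl hB
        · have hr0 : r ≠ 0 := by intro h0; rw [h0, map_zero] at hB; exact hB rfl
          have hge := hcon hr0
          have h1 := nu_hasseDeriv_ge hν r b0 hB
          have heps : eps ν r < eps ν Q := hkey r hr0 hdr
          have : (b0:ℝ) * eps ν r < b0 * eps ν Q := mul_lt_mul_of_pos_left heps hb0pos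
          refine Or.inr ⟨hB, ?_⟩
          rw [hqQval]; linarith
      have := nu_add_left hν hqQne hside
      exact ⟨this.1, by rw [this.2, hqQval]⟩
    -- ν (f*g) ≥ ν q + ν Q
    have h1 : ν q + ν Q ≤ ν (f * g) := by
      by_cases hr0 : r = 0
      · rw [hfg_eq, hr0, add_zero, hqQv]
      · have hne : q * Q + r ≠ 0 := hfg_eq ▸ hfg
        have hmin := hν.2 (q * Q) r hqQ0 hr0 hne
        have hge := hcon hr0
        rw [hfg_eq]
        rcases min_le_iff.mp hmin with h | h <;> linarith [hqQv]
    have h2 := nu_hasseDeriv_mul_ge hν b0 hDfg.1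
    have hm : max (eps ν f) (eps ν g) < eps ν Q :=
      max_lt (hkey f hf hdf) (hkey g hg hdg)
    have h3 : (b0:ℝ) * max (eps ν f) (eps ν g) < b0 * eps ν Q :=
      mul_lt_mul_of_pos_left hm hb0pos
    linarith [hDfg.2]
  obtain ⟨hr0, hlt⟩ := hmain
  have hval : ν (f * g) = ν r := by
    have hre : f * g = r + q * Q := by rw [hfg_eq]; ring
    rw [hre]
    exact (nu_add_left hν hr0 (Or.inr ⟨hqQ0, by rw [hqQv]; exact hlt⟩)).2
  exact ⟨hr0, by rw [← hval, hfgv], fun _ => by rw [← hval, hfgv] at hlt ⊢; exact hlt⟩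

-- qc computation lemmas
lemma qc_zero_poly (Q : Polynomial K) : ∀ i, qc Q 0 i = 0 := by
  intro i
  induction i with
  | zero => simp [qc]
  | succ i ih => rw [qc, zero_divByMonic]; exact ih

lemma qc_mul_self (hmon : (Q : Polynomial K).Monic) (h : Polynomial K) :
    qc Q (h * Q) 0 = 0 ∧ ∀ i, qc Q (h * Q) (i + 1) = qc Q h i := by
  constructor
  · show (h * Q) %ₘ Q = 0
    rw [(modByMonic_eq_zero_iff_dvd hmon)]
    exact Dvd.intro_left h rfl
  · intro i
    show qc Q ((h * Q) /ₘ Q) i = qc Q h i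
    rw [mul_comm, mul_divByMonic_cancel_left _ hmon]

lemma qc_mul_pow_lt (hmon : (Q : Polynomial K).Monic) (h : Polynomial K) (N : ℕ) :
    ∀ j < N, qc Q (h * Q ^ N) j = 0 := by
  induction N with
  | zero => omega
  | succ N ih =>
    intro j hj
    have hrw : h * Q ^ (N + 1) = h * Q ^ N * Q := by ring
    rw [hrw]
    rcases Nat.eq_zero_or_pos j with rfl | hjpos
    · exact (qc_mul_self hmon _).1
    · obtain ⟨j', rfl⟩ : ∃ j', j = j' + 1 := ⟨j - 1, by omega⟩
      rw [(qc_mul_self hmon _).2 j']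
      exact ih j' (by omega)

lemma qc_mul_pow_add (hmon : (Q : Polynomial K).Monic) (h : Polynomial K) (N : ℕ) :
    ∀ i, qc Q (h * Q ^ N) (N + i) = qc Q h i := by
  induction N with
  | zero => intro i; simp
  | succ N ih =>
    intro i
    have hrw : h * Q ^ (N + 1) = h * Q ^ N * Q := by ring
    have hidx : N + 1 + i = (N + i) + 1 := by omega
    rw [hrw, hidx, (qc_mul_self hmon _).2 (N + i)]
    exact ih i

lemma qc_one (Q h : Polynomial K) : qc Q h 1 = (h /ₘ Q) %ₘ Q := rfl

lemma qc_ge_two (Q h : Polynomial K) (hdiv : (h /ₘ Q) /ₘ Q = 0) (i : ℕ) :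
    qc Q h (i + 2) = 0 := by
  show qc Q ((h /ₘ Q) /ₘ Q) i = 0
  rw [hdiv]; exact qc_zero_poly Q i

end Aux2

/-- For `f, g` of degree smaller than `deg Q`, the product `(f Q^n) (g Q^m)` has
truncated value `ν(f Q^n) + ν(g Q^m)` and `δ_Q = n + m`. -/
theorem nuQ_deltaQ_monomial_mul (ν : Polynomial K → ℝ) (hν : IsVal ν)
    (Q : Polynomial K) (hQ : IsKeyPol ν Q)
    (f g : Polynomial K) (hf : f ≠ 0) (hg : g ≠ 0)
    (hdf : f.natDegree < Q.natDegree) (hdg : g.natDegree < Q.natDegree)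
    (n m : ℕ) :
    nuQ ν Q (f * Q ^ n * (g * Q ^ m)) = ν (f * Q ^ n) + ν (g * Q ^ m) ∧
      deltaQ ν Q (f * Q ^ n * (g * Q ^ m)) = n + m := by
  have hmon := hQ.1
  have hdQ := hQ.2.1
  have hQ0 : Q ≠ 0 := hmon.ne_zero
  set N := n + m with hN
  have hPeq : f * Q ^ n * (g * Q ^ m) = f * g * Q ^ N := by rw [hN]; ring
  rw [hPeq]
  obtain ⟨hr0, hrv, hqlt⟩ := core_key hν hQ hf hg hdf hdg
  have hdq : f * g /ₘ Q ≠ 0 → (f * g /ₘ Q).degree < Q.degree := by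
    intro hq0
    have h1 : (f * g /ₘ Q).natDegree = (f * g).natDegree - Q.natDegree :=
      natDegree_divByMonic _ hmon
    have h2 : (f * g).natDegree = f.natDegree + g.natDegree := natDegree_mul hf hg
    apply degree_lt_degree; omega
  set h := f * g with hh
  set r := h %ₘ Q with hr
  set q := h /ₘ Q with hq
  have hqmod : q %ₘ Q = q := by
    by_cases hq0 : q = 0
    · rw [hq0, zero_modByMonic]
    · rw [modByMonic_eq_self_iff hmon]; exact hdq hq0
  have hqdiv : q /ₘ Q = 0 := by
    by_cases hq0 : q = 0
    · rw [hq0, zero_divByMonic]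
    · rw [divByMonic_eq_zero_iff hmon]; exact hdq hq0
  have qcN : qc Q (h * Q ^ N) N = r := by
    have hx := qc_mul_pow_add hmon h N 0
    rwa [Nat.add_zero] at hx
  have qcN1 : qc Q (h * Q ^ N) (N + 1) = q := by
    rw [qc_mul_pow_add hmon h N 1, qc_one, ← hq, hqmod]
  have qclt := qc_mul_pow_lt hmon h N
  have qcge : ∀ k, qc Q (h * Q ^ N) (N + (k + 2)) = 0 := by
    intro k
    rw [qc_mul_pow_add hmon h N (k + 2)]
    apply qc_ge_two
    rw [← hq]; exact hqdiv
  have hchar : ∀ i, qc Q (h * Q ^ N) i ≠ 0 → i = N ∨ i = N + 1 := by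
    intro i hi
    by_contra hcontra
    push_neg at hcontra
    rcases lt_or_ge i N with hlt | hge
    · exact hi (qclt i hlt)
    · obtain ⟨k, rfl⟩ : ∃ k, i = N + (k + 2) := ⟨i - N - 2, by omega⟩
      exact hi (qcge k)
  have hA : ν (r * Q ^ N) = ν r + N * ν Q := by
    rw [hν.1 r _ hr0 (pow_ne_zero _ hQ0), nu_pow hν hQ0]
  have hB : q ≠ 0 → ν (q * Q ^ (N + 1)) = ν q + ((N : ℝ) + 1) * ν Q := by
    intro hq0
    rw [hν.1 q _ hq0 (pow_ne_zero _ hQ0), nu_pow hν hQ0]; push_cast; ring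
  have hAB : q ≠ 0 → ν (r * Q ^ N) < ν (q * Q ^ (N + 1)) := by
    intro hq0
    rw [hA, hB hq0]
    have hx := hqlt hq0
    nlinarith [hx]
  have hnuQ : nuQ ν Q (h * Q ^ N) = ν (r * Q ^ N) := by
    unfold nuQ
    have hmem : ν (r * Q ^ N) ∈
        {x : ℝ | ∃ i, qc Q (h * Q ^ N) i ≠ 0 ∧ x = ν (qc Q (h * Q ^ N) i * Q ^ i)} :=
      ⟨N, by rw [qcN]; exact hr0, by rw [qcN]⟩
    have hsub : {x : ℝ | ∃ i, qc Q (h * Q ^ N) i ≠ 0 ∧ x = ν (qc Q (h * Q ^ N) i * Q ^ i)} ⊆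
        {ν (r * Q ^ N), ν (q * Q ^ (N + 1))} := by
      rintro x ⟨i, hi, rfl⟩
      rcases hchar i hi with rfl | rfl
      · left; rw [qcN]
      · right; rw [qcN1]; exact rfl
    have hfin : Set.Finite
        {x : ℝ | ∃ i, qc Q (h * Q ^ N) i ≠ 0 ∧ x = ν (qc Q (h * Q ^ N) i * Q ^ i)} :=
      ((Set.finite_singleton _).insert _).subset hsub
    apply le_antisymm
    · exact csInf_le hfin.bddBelow hmem
    · apply le_csInf ⟨_, hmem⟩
      rintro x ⟨i, hi, rfl⟩
      rcases hchar i hi with rfl | rfl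
      · rw [qcN]
      · have hq0 : q ≠ 0 := by rwa [qcN1] at hi
        rw [qcN1]
        exact (hAB hq0).le
  have hSQ : SQ ν Q (h * Q ^ N) = {N} := by
    ext i
    simp only [SQ, Set.mem_setOf_eq, Set.mem_singleton_iff]
    constructor
    · rintro ⟨hi, hval⟩
      rcases hchar i hi with rfl | rfl
      · rfl
      · exfalso
        have hq0 : q ≠ 0 := by rwa [qcN1] at hi
        rw [qcN1, hnuQ] at hval
        exact absurd hval (ne_of_gt (hAB hq0))
    · rintro rfl
      exact ⟨by rw [qcN]; exact hr0, by rw [qcN, hnuQ]⟩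
  constructor
  · rw [hnuQ, hA, hrv, hν.1 f _ hf (pow_ne_zero _ hQ0), hν.1 g _ hg (pow_ne_zero _ hQ0),
      nu_pow hν hQ0, nu_pow hν hQ0, hN]
    push_cast; ring
  · unfold deltaQ
    rw [hSQ]
    exact csSup_singleton _
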